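/- (Proposition 5, non-singularity of the differential-decoupling PPM FIM.) Assume N_f ≥ 2 and T_f ≠ 0. Then the matrix J_diff has trivial kernel (full column rank). Consequently, for every Hermitian positive definite complex matrix M indexed by the row index of J_diff (in the paper, M = P_diffᵀ · I_η · P_diff whenever this matrix is positive definite), the matrix J_diffᵀ · M · J_diff (equal to J_diffᴴ · M · J_diff since J_diff has real entries) is Hermitian positive definite, and in particular invertible: differential decoupling based on the starting symbol position renders the PPM ISAC Fisher information matrix non-singular without pilots. -/

import Mathlib

open Matrix
open scoped ComplexOrder

noncomputable section

/-- The matrix `H`: first column all ones, agreeing with the identity elsewhere. -/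
def Hmat (L : ℕ) : Matrix (Fin L) (Fin L) ℂ :=
  Matrix.of fun i j => if j.val = 0 ∨ i = j then 1 else 0

/-- The all-ones column vector `E` of length `L`. -/
def Emat (L : ℕ) : Matrix (Fin L) (Fin 1) ℂ :=
  Matrix.of fun _ _ => 1

/-- The matrix `F` of the differential decoupling strategy: for each PRI, the
time-difference rows `t^κ − t^ref` form the block `[0, E]` and the absolute-time rows `t^κ`
form the block `[H, E]`. -/
def Fmat (L Nf : ℕ) : Matrix (Fin Nf × Fin 2 × Fin L) (Fin L ⊕ Fin 1) ℂ :=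
  Matrix.of fun i j =>
    match i, j with
    | (_, s, a), Sum.inl b => if s.val = 1 then Hmat L a b else 0
    | (_, _, a), Sum.inr b => Emat L a b

/-- The Jacobian matrix `J_diff` of the differential decoupling strategy: block diagonal with
diagonal blocks `F`, `L_N` and `I_L`, where the `κ`-th block of `L_N` is `(2πκT_f)·H`. -/
def Jdiff (L Nf : ℕ) (Tf : ℝ) :
    Matrix ((Fin Nf × Fin 2 × Fin L) ⊕ (Fin Nf × Fin L) ⊕ Fin L)
      ((Fin L ⊕ Fin 1) ⊕ Fin L ⊕ Fin L) ℂ :=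
  Matrix.of fun i j =>
    match i, j with
    | Sum.inl r, Sum.inl c => Fmat L Nf r c
    | Sum.inr (Sum.inl (κ, a)), Sum.inr (Sum.inl b) =>
        ((2 * Real.pi * (κ.1 : ℝ) * Tf : ℝ) : ℂ) * Hmat L a b
    | Sum.inr (Sum.inr a), Sum.inr (Sum.inr b) => (1 : Matrix (Fin L) (Fin L) ℂ) a b
    | _, _ => 0

/-!
`H` is unit lower triangular, hence invertible, and `J_diff` is block diagonal, so it suffices
that each diagonal block is injective. In `F` the time-difference rows `[0, E]` force the
`Fin 1` coordinate to vanish, after which the rows `[H, E]` reduce to `H x = 0`. The `κ = 1`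
block of `L_N` is the nonzero multiple `2πT_f · H` of `H`, and the last block is the identity.
Since `J_diff` has real entries, `J_diffᵀ M J_diff = J_diffᴴ M J_diff`, which is positive
definite for positive definite `M` because `J_diff` is injective.
-/

lemma Hmat_isLowerTriangular (L : ℕ) : (Hmat L).IsLowerTriangular := by
  intro i j hij
  have hij : i < j := hij
  have hj : j.val ≠ 0 := by omega
  simp [Hmat, hj, hij.ne]

lemma Hmat_det (L : ℕ) : (Hmat L).det = 1 := by
  rw [det_of_isLowerTriangular _ (Hmat_isLowerTriangular L)]
  simp [Hmat]

lemma Hmat_mulVec_injective (L : ℕ) : Function.Injective (Hmat L).mulVec :=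
  mulVec_injective_of_det_ne_zero (by simp [Hmat_det])

lemma mulVec_injective_fromBlocks_zero {l m n o R : Type*} [Fintype l] [Fintype m]
    [NonUnitalNonAssocSemiring R] {A : Matrix n l R} {D : Matrix o m R}
    (hA : Function.Injective A.mulVec) (hD : Function.Injective D.mulVec) :
    Function.Injective (fromBlocks A 0 0 D).mulVec := by
  intro x y hxy
  simp only [fromBlocks_mulVec, zero_mulVec, add_zero, zero_add] at hxy
  have hl : A *ᵥ (x ∘ Sum.inl) = A *ᵥ (y ∘ Sum.inl) := congrArg (· ∘ Sum.inl) hxy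
  have hr : D *ᵥ (x ∘ Sum.inr) = D *ᵥ (y ∘ Sum.inr) := congrArg (· ∘ Sum.inr) hxy
  rw [← Sum.elim_comp_inl_inr x, ← Sum.elim_comp_inl_inr y, hA hl, hD hr]

def LNmat (L Nf : ℕ) (Tf : ℝ) : Matrix (Fin Nf × Fin L) (Fin L) ℂ :=
  Matrix.of fun p b => ((2 * Real.pi * (p.1.1 : ℝ) * Tf : ℝ) : ℂ) * Hmat L p.2 b

lemma Jdiff_eq_fromBlocks (L Nf : ℕ) (Tf : ℝ) :
    Jdiff L Nf Tf = fromBlocks (Fmat L Nf) 0 0 (fromBlocks (LNmat L Nf Tf) 0 0 1) := by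
  ext (r | ⟨κ, a⟩ | a) ((c | c) | b | b) <;> rfl

lemma Fmat_mulVec_apply (L Nf : ℕ) (v : Fin L ⊕ Fin 1 → ℂ) (κ : Fin Nf) (s : Fin 2) (a : Fin L) :
    (Fmat L Nf *ᵥ v) (κ, s, a) =
      (if s.val = 1 then (Hmat L *ᵥ (v ∘ Sum.inl)) a else 0) + v (Sum.inr 0) := by
  split_ifs with hs <;>
    simp [Fmat, Emat, hs, mulVec, dotProduct, Fintype.sum_sum_type]

lemma LNmat_mulVec_apply (L Nf : ℕ) (Tf : ℝ) (x : Fin L → ℂ) (κ : Fin Nf) (a : Fin L) :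
    (LNmat L Nf Tf *ᵥ x) (κ, a) =
      ((2 * Real.pi * (κ.1 : ℝ) * Tf : ℝ) : ℂ) * (Hmat L *ᵥ x) a := by
  simp [LNmat, mulVec, dotProduct, Finset.mul_sum, mul_assoc]

lemma Fmat_mulVec_injective {L Nf : ℕ} (hL : 1 ≤ L) (hNf : 1 ≤ Nf) :
    Function.Injective (Fmat L Nf).mulVec := by
  refine (injective_iff_map_eq_zero (Fmat L Nf).mulVecLin).2
    fun v (hv : Fmat L Nf *ᵥ v = 0) => ?_
  have hFv : ∀ s a, (Fmat L Nf *ᵥ v) (⟨0, hNf⟩, s, a) = 0 := fun s a => by rw [hv]; rfl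
  have hE : v (Sum.inr 0) = 0 := by
    simpa [Fmat_mulVec_apply] using hFv 0 ⟨0, hL⟩
  have hH : v ∘ Sum.inl = 0 := Hmat_mulVec_injective L <| by
    ext a
    simpa [Fmat_mulVec_apply, hE] using hFv 1 a
  ext (b | b)
  · exact congrFun hH b
  · rwa [Subsingleton.elim b 0]

lemma LNmat_mulVec_injective {L Nf : ℕ} (hNf : 2 ≤ Nf) {Tf : ℝ} (hTf : Tf ≠ 0) :
    Function.Injective (LNmat L Nf Tf).mulVec := by
  refine (injective_iff_map_eq_zero (LNmat L Nf Tf).mulVecLin).2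
    fun x (hx : LNmat L Nf Tf *ᵥ x = 0) => Hmat_mulVec_injective L ?_
  ext a
  have h := congrFun hx (⟨1, hNf⟩, a)
  rw [LNmat_mulVec_apply] at h
  simpa [Real.pi_ne_zero, hTf] using h

lemma Jdiff_mulVec_injective {L Nf : ℕ} (hL : 1 ≤ L) (hNf : 2 ≤ Nf) {Tf : ℝ} (hTf : Tf ≠ 0) :
    Function.Injective (Jdiff L Nf Tf).mulVec := by
  rw [Jdiff_eq_fromBlocks]
  exact mulVec_injective_fromBlocks_zero (Fmat_mulVec_injective hL (by omega))
    (mulVec_injective_fromBlocks_zero (LNmat_mulVec_injective hNf hTf)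
      (mulVec_injective_of_isUnit isUnit_one))

lemma Jdiff_conjTranspose (L Nf : ℕ) (Tf : ℝ) : (Jdiff L Nf Tf)ᴴ = (Jdiff L Nf Tf)ᵀ := by
  ext j i
  rcases i with ⟨κ, s, a⟩ | ⟨κ, a⟩ | a <;> rcases j with (b | b) | b | b <;>
    simp [Jdiff, Fmat, Emat, Hmat, one_apply, apply_ite (star : ℂ → ℂ)]

/-- Proposition 5, non-singularity of the differential-decoupling PPM FIM: `J_diff` has
trivial kernel, and for every Hermitian positive definite `M` the matrix
`J_diffᵀ · M · J_diff` is Hermitian positive definite, in particular invertible. -/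
theorem diff_fim_nonsingular (L Nf : ℕ) (hL : 1 ≤ L) (hNf : 2 ≤ Nf) (Tf : ℝ) (hTf : Tf ≠ 0) :
    (∀ v : ((Fin L ⊕ Fin 1) ⊕ Fin L ⊕ Fin L) → ℂ,
        (Jdiff L Nf Tf).mulVec v = 0 → v = 0) ∧
      ∀ M : Matrix ((Fin Nf × Fin 2 × Fin L) ⊕ (Fin Nf × Fin L) ⊕ Fin L)
          ((Fin Nf × Fin 2 × Fin L) ⊕ (Fin Nf × Fin L) ⊕ Fin L) ℂ, M.PosDef →
        ((Jdiff L Nf Tf)ᵀ * M * Jdiff L Nf Tf).PosDef ∧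
          IsUnit ((Jdiff L Nf Tf)ᵀ * M * Jdiff L Nf Tf) := by
  have hJ := Jdiff_mulVec_injective hL hNf hTf
  refine ⟨fun v hv => hJ (hv.trans (mulVec_zero _).symm), fun M hM => ?_⟩
  have hPD : ((Jdiff L Nf Tf)ᵀ * M * Jdiff L Nf Tf).PosDef := by
    rw [← Jdiff_conjTranspose]
    exact hM.conjTranspose_mul_mul_same hJ
  exact ⟨hPD, hPD.isUnit⟩
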